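/- For the quartic matrix potential V(x) = (μ/2)x² + (γ/4)x⁴ with μ, γ > 0, the asymptotic eigenvalue density ρ(x) = (1/2π)(μ + 2a²γ + γx²)√(4a² − x²) on [−2a, 2a], where a² = (√(μ² + 12γ) − μ)/(6γ), is a probability density: ∫ ρ(x) dx = 1. -/

import Mathlib

open MeasureTheory Real

/-- The parameter `a²` of the quartic ensemble. -/
noncomputable def quarticA2 (μ γ : ℝ) : ℝ := (Real.sqrt (μ^2 + 12*γ) - μ) / (6*γ)

/-- The asymptotic eigenvalue density of the quartic ensemble. -/
noncomputable def quarticDensity (μ γ x : ℝ) : ℝ :=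
  if |x| ≤ 2 * Real.sqrt (quarticA2 μ γ) then
    (1/(2*Real.pi)) * (μ + 2*(quarticA2 μ γ)*γ + γ*x^2) *
      Real.sqrt (4*(quarticA2 μ γ) - x^2)
  else 0

/-!
Rescaling `[-2a, 2a]` to `[-1, 1]` reduces the integral to the area `π/2` of the unit
half-disc and the second moment `π/8` of `√(1 - x²)` (substitute `x = sin θ`), giving
`∫ ρ = a² (μ + 3γa²)`. This equals `1` because `a²` is the positive root of `3γt² + μt = 1`.
-/

theorem integral_sq_mul_sqrt_one_sub_sq :
    ∫ x in (-1 : ℝ)..1, x ^ 2 * √(1 - x ^ 2) = π / 8 :=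
  calc
    _ = ∫ x in sin (-(π / 2))..sin (π / 2), x ^ 2 * √(1 - x ^ 2) := by
          rw [sin_neg, sin_pi_div_two]
    _ = ∫ x in (-(π / 2))..(π / 2), sin x ^ 2 * √(1 - sin x ^ 2) * cos x :=
          (intervalIntegral.integral_comp_mul_deriv (fun x _ => hasDerivAt_sin x)
            continuousOn_cos (by fun_prop)).symm
    _ = ∫ x in (-(π / 2))..(π / 2), sin x ^ 2 * cos x ^ 2 := by
          refine intervalIntegral.integral_congr_ae (ae_of_all _ fun x hx => ?_)
          rw [Set.uIoc_of_le (neg_le_self (half_pos pi_pos).le), Set.mem_Ioc] at hx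
          rw [← cos_eq_sqrt_one_sub_sin_sq hx.1.le hx.2, mul_assoc, ← pow_two]
    _ = π / 8 := by
          rw [integral_sin_sq_mul_cos_sq, mul_neg,
            show 4 * (π / 2) = 2 * π by ring, sin_neg, sin_two_pi]
          ring

theorem integral_neg_eq_smul_integral_comp_mul {E : Type*} [NormedAddCommGroup E]
    [NormedSpace ℝ E] (f : ℝ → E) (r : ℝ) :
    ∫ x in -r..r, f x = r • ∫ u in (-1 : ℝ)..1, f (r * u) := by
  rw [intervalIntegral.smul_integral_comp_mul_left, mul_neg_one, mul_one]

theorem sqrt_sq_sub_mul_sq {r : ℝ} (hr : 0 ≤ r) (u : ℝ) :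
    √(r ^ 2 - (r * u) ^ 2) = r * √(1 - u ^ 2) := by
  rw [show r ^ 2 - (r * u) ^ 2 = r ^ 2 * (1 - u ^ 2) by ring, sqrt_mul (sq_nonneg r),
    sqrt_sq hr]

theorem integral_sqrt_sq_sub_sq {r : ℝ} (hr : 0 ≤ r) :
    ∫ x in -r..r, √(r ^ 2 - x ^ 2) = π * r ^ 2 / 2 := by
  simp_rw [integral_neg_eq_smul_integral_comp_mul _ r, sqrt_sq_sub_mul_sq hr,
    intervalIntegral.integral_const_mul, integral_sqrt_one_sub_sq, smul_eq_mul]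
  ring

theorem integral_sq_mul_sqrt_sq_sub_sq {r : ℝ} (hr : 0 ≤ r) :
    ∫ x in -r..r, x ^ 2 * √(r ^ 2 - x ^ 2) = π * r ^ 4 / 8 := by
  simp_rw [integral_neg_eq_smul_integral_comp_mul _ r, sqrt_sq_sub_mul_sq hr,
    show ∀ u : ℝ, (r * u) ^ 2 * (r * √(1 - u ^ 2)) = r ^ 3 * (u ^ 2 * √(1 - u ^ 2)) by
      intro u; ring,
    intervalIntegral.integral_const_mul, integral_sq_mul_sqrt_one_sub_sq, smul_eq_mul]
  ring

theorem integral_add_mul_sq_mul_sqrt_sq_sub_sq (c g : ℝ) {r : ℝ} (hr : 0 ≤ r) :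
    ∫ x in -r..r, (c + g * x ^ 2) * √(r ^ 2 - x ^ 2) = π * r ^ 2 * (4 * c + g * r ^ 2) / 8 := by
  simp_rw [add_mul, mul_assoc]
  rw [intervalIntegral.integral_add (by apply Continuous.intervalIntegrable; fun_prop)
      (by apply Continuous.intervalIntegrable; fun_prop),
    intervalIntegral.integral_const_mul, intervalIntegral.integral_const_mul,
    integral_sqrt_sq_sub_sq hr, integral_sq_mul_sqrt_sq_sub_sq hr]
  ring

theorem quarticA2_pos {μ γ : ℝ} (hγ : 0 < γ) : 0 < quarticA2 μ γ := by
  have : μ < √(μ ^ 2 + 12 * γ) := lt_sqrt_of_sq_lt (by linarith)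
  exact div_pos (sub_pos.mpr this) (by positivity)

theorem quarticA2_mul_add_eq_one {μ γ : ℝ} (hγ : 0 < γ) :
    quarticA2 μ γ * (μ + 3 * γ * quarticA2 μ γ) = 1 := by
  have hs : √(μ ^ 2 + 12 * γ) ^ 2 = μ ^ 2 + 12 * γ := sq_sqrt (by positivity)
  rw [quarticA2]
  field_simp
  linear_combination 3 * hs

theorem quarticDensity_eq_indicator {μ γ : ℝ} (hA : 0 ≤ quarticA2 μ γ) :
    quarticDensity μ γ = (Set.Icc (-(2 * √(quarticA2 μ γ))) (2 * √(quarticA2 μ γ))).indicator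
      fun x => (2 * π)⁻¹ * ((μ + 2 * quarticA2 μ γ * γ + γ * x ^ 2) *
        √((2 * √(quarticA2 μ γ)) ^ 2 - x ^ 2)) := by
  ext x
  simp only [quarticDensity, Set.indicator_apply, Set.mem_Icc, ← abs_le, mul_pow, sq_sqrt hA,
    one_div, mul_assoc]
  norm_num

theorem integral_quarticDensity {μ γ : ℝ} (hA : 0 ≤ quarticA2 μ γ) :
    ∫ x, quarticDensity μ γ x = quarticA2 μ γ * (μ + 3 * γ * quarticA2 μ γ) := by
  have hr : 0 ≤ 2 * √(quarticA2 μ γ) := by positivity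
  rw [quarticDensity_eq_indicator hA, integral_indicator measurableSet_Icc,
    integral_Icc_eq_integral_Ioc, ← intervalIntegral.integral_of_le (by linarith),
    intervalIntegral.integral_const_mul, integral_add_mul_sq_mul_sqrt_sq_sub_sq _ _ hr, mul_pow,
    sq_sqrt hA]
  field_simp
  ring

theorem quarticDensity_integral_eq_one_general (μ γ : ℝ) (hγ : 0 < γ) :
    ∫ x : ℝ, quarticDensity μ γ x = 1 := by
  rw [integral_quarticDensity (quarticA2_pos hγ).le, quarticA2_mul_add_eq_one hγ]

theorem quarticDensity_integral_eq_one (μ γ : ℝ) (hμ : 0 < μ) (hγ : 0 < γ) :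
    ∫ x : ℝ, quarticDensity μ γ x = 1 :=
  quarticDensity_integral_eq_one_general μ γ hγ
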